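/- arXiv:math/0405552 — 4 statements merged into one kernel-verified Lean document; each statement's English description precedes it below -/
import Mathlib

section
/- Let X be a geodesic space and r a reflection of X with wall F_r and half-spaces X⁺, X⁻ (the two convex connected components of X \ F_r, which r swaps). If x ∈ X⁺ and y ∈ X⁻, then d(x, r y) < d(x, y). -/
open Metric Set

variable {X : Type*} [MetricSpace X]

/-- `ξ` is a geodesic from `x` to `y`: an isometric embedding of `[0, d(x,y)]`. -/
def IsGeodesicMap (x y : X) (ξ : ℝ → X) : Prop :=
  ξ 0 = x ∧ ξ (dist x y) = y ∧
    ∀ s ∈ Set.Icc (0 : ℝ) (dist x y), ∀ t ∈ Set.Icc (0 : ℝ) (dist x y),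
      dist (ξ s) (ξ t) = |s - t|

/-- `X` is a geodesic space. -/
def GeodesicSpace (X : Type*) [MetricSpace X] : Prop :=
  ∀ x y : X, ∃ ξ : ℝ → X, IsGeodesicMap x y ξ

/-- A set is (geodesically) convex if it contains every geodesic between its points. -/
def GeodConvex (C : Set X) : Prop :=
  ∀ x ∈ C, ∀ y ∈ C, ∀ ξ : ℝ → X, IsGeodesicMap x y ξ →
    ∀ t ∈ Set.Icc (0 : ℝ) (dist x y), ξ t ∈ C

/-- The wall (fixed-point set) of an isometry. -/
def wall (r : X ≃ᵢ X) : Set X := {x : X | r x = x}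

/-- `r` is a reflection with half-spaces `Xp` and `Xm`: `r` is an involution, the wall has
empty interior, and the complement of the wall has exactly the two convex connected
components `Xp` and `Xm`. -/
def IsReflectionWith (r : X ≃ᵢ X) (Xp Xm : Set X) : Prop :=
  (∀ x, r (r x) = x) ∧ interior (wall r) = ∅ ∧
    Xp.Nonempty ∧ Xm.Nonempty ∧ Xp ≠ Xm ∧ GeodConvex Xp ∧ GeodConvex Xm ∧
    Xp ∪ Xm = (wall r)ᶜ ∧
    ∀ x ∈ (wall r)ᶜ,
      connectedComponentIn (wall r)ᶜ x = Xp ∨ connectedComponentIn (wall r)ᶜ x = Xm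

/-- `r` is a reflection of `X`. -/
def IsReflection (r : X ≃ᵢ X) : Prop := ∃ Xp Xm, IsReflectionWith r Xp Xm

/-- The set of reflections lying in a group `Γ` of isometries of `X`. -/
def reflections (Γ : Subgroup (X ≃ᵢ X)) : Set (X ≃ᵢ X) :=
  {r : X ≃ᵢ X | r ∈ Γ ∧ IsReflection r}

/-- The action of `Γ` on `X` is proper. -/
def ProperAction (Γ : Subgroup (X ≃ᵢ X)) : Prop :=
  ∀ (x : X) (N : ℝ), 0 < N → {γ : X ≃ᵢ X | γ ∈ Γ ∧ dist (γ x) x ≤ N}.Finite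

/-- `Γ` is a reflection group: it is generated by a set of reflections of `X`. -/
def IsReflectionGroup (Γ : Subgroup (X ≃ᵢ X)) : Prop :=
  ∃ R₀ ⊆ {r : X ≃ᵢ X | IsReflection r}, Subgroup.closure R₀ = Γ

/-- The complement of the union of all walls of reflections in `Γ`. -/
def chamberComplement (Γ : Subgroup (X ≃ᵢ X)) : Set X :=
  (⋃ r ∈ reflections Γ, wall r)ᶜ

/-- `C` is a chamber: a connected component of the complement of the union of the walls. -/
def IsChamber (Γ : Subgroup (X ≃ᵢ X)) (C : Set X) : Prop :=
  ∃ x ∈ chamberComplement Γ, C = connectedComponentIn (chamberComplement Γ) x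

/-- For each reflection `r ∈ Γ`, `Xp r` and `Xm r` are the two half-spaces of `r`,
`Xp r` being the one containing the chamber `C`. -/
def HalfSpaces (Γ : Subgroup (X ≃ᵢ X)) (C : Set X) (Xp Xm : (X ≃ᵢ X) → Set X) : Prop :=
  ∀ r ∈ reflections Γ, IsReflectionWith r (Xp r) (Xm r) ∧ C ⊆ Xp r

/-- `Γ` is a cocompact discrete reflection group of `X` with chamber `C`. -/
def CocompactDiscrete (Γ : Subgroup (X ≃ᵢ X)) (C : Set X) : Prop :=
  IsReflectionGroup Γ ∧ ProperAction Γ ∧ IsChamber Γ C ∧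
    IsCompact (closure C) ∧ ∀ γ : X ≃ᵢ X, γ ∈ Γ → γ '' C = C → γ = 1

/-- `S` is a minimal set of reflections in `Γ` with `C = ⋂ s ∈ S, Xp s`. -/
def MinimalHalfSpaceSet (Γ : Subgroup (X ≃ᵢ X)) (C : Set X)
    (Xp : (X ≃ᵢ X) → Set X) (S : Set (X ≃ᵢ X)) : Prop :=
  S ⊆ reflections Γ ∧ C = ⋂ s ∈ S, Xp s ∧
    ∀ s₀ ∈ S, C ≠ ⋂ s ∈ S \ {s₀}, Xp s

/-- `n` is the word length of `γ` with respect to the generating set `S`. -/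
def IsWordLength {G : Type*} [Group G] (S : Set G) (γ : G) (n : ℕ) : Prop :=
  (∃ l : List G, (∀ g ∈ l, g ∈ S) ∧ l.prod = γ ∧ l.length = n) ∧
    ∀ l : List G, (∀ g ∈ l, g ∈ S) → l.prod = γ → n ≤ l.length

/-- `(W, S)` is a Coxeter system. -/
def IsCoxeterSystemOn (W : Type*) [Group W] (S : Set W) : Prop :=
  ∃ (B : Type) (M : CoxeterMatrix B) (cs : CoxeterSystem M W),
    Set.range cs.simple = S


private lemma geod_subset_component_aux (hX : GeodesicSpace X) {S F : Set X}
    (hS : GeodConvex S) (hSF : S ⊆ F) {a b : X} (ha : a ∈ S) (hb : b ∈ S) :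
    b ∈ connectedComponentIn F a := by
  obtain ⟨ξ, hξ⟩ := hX a b
  obtain ⟨hξ0, hξd, hdd⟩ := hξ
  have hd : (0:ℝ) ≤ dist a b := dist_nonneg
  have hlip : LipschitzOnWith 1 ξ (Set.Icc 0 (dist a b)) := by
    apply LipschitzOnWith.of_dist_le_mul
    intro s hs t ht
    rw [hdd s hs t ht, Real.dist_eq, NNReal.coe_one, one_mul]
  have hconn : IsConnected (ξ '' Set.Icc 0 (dist a b)) :=
    (isConnected_Icc hd).image ξ hlip.continuousOn
  have hsub : ξ '' Set.Icc 0 (dist a b) ⊆ F := by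
    rintro w ⟨t, ht, rfl⟩
    exact hSF (hS a ha b hb ξ ⟨hξ0, hξd, hdd⟩ t ht)
  have hmem : a ∈ ξ '' Set.Icc 0 (dist a b) := ⟨0, ⟨le_refl _, hd⟩, hξ0⟩
  exact hconn.isPreconnected.subset_connectedComponentIn hmem hsub ⟨dist a b, ⟨hd, le_refl _⟩, hξd⟩

/-- if `x ∈ X⁺` and `y ∈ X⁻` then `d(x, ry) < d(x, y)`. -/
theorem dist_reflect_lt_of_mem_minus
    (hX : GeodesicSpace X) (r : X ≃ᵢ X) (Xp Xm : Set X)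
    (hr : IsReflectionWith r Xp Xm)
    (hswap : ∀ z : X, (z ∈ Xp → r z ∈ Xm) ∧ (z ∈ Xm → r z ∈ Xp))
    {x y : X} (hx : x ∈ Xp) (hy : y ∈ Xm) :
    dist x (r y) < dist x y := by
  obtain ⟨hinv, hint, hPne, hMne, hne, hPconv, hMconv, hunion, hcomp⟩ := hr
  have hPc : Xp ⊆ (wall r)ᶜ := hunion ▸ Set.subset_union_left
  have hMc : Xm ⊆ (wall r)ᶜ := hunion ▸ Set.subset_union_right
  -- Xp and Xm are disjoint
  have hdisj : ∀ z, z ∈ Xp → z ∈ Xm → False := by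
    intro z hzp hzm
    have hPK : Xp ⊆ connectedComponentIn (wall r)ᶜ z := fun w hw =>
      geod_subset_component_aux hX hPconv hPc hzp hw
    have hMK : Xm ⊆ connectedComponentIn (wall r)ᶜ z := fun w hw =>
      geod_subset_component_aux hX hMconv hMc hzm hw
    have hPM : Xp ⊆ Xm ∨ Xm ⊆ Xp := by
      rcases hcomp z (hPc hzp) with h | h
      · exact Or.inr (h ▸ hMK)
      · exact Or.inl (h ▸ hPK)
    apply hne
    rcases hPM with h | h
    · refine Set.Subset.antisymm h (fun a ha => ?_)
      have : r (r a) ∈ Xp := (hswap (r a)).2 (h ((hswap a).2 ha))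
      rwa [hinv a] at this
    · refine Set.Subset.antisymm (fun a ha => ?_) h
      have : r (r a) ∈ Xm := (hswap (r a)).1 (h ((hswap a).1 ha))
      rwa [hinv a] at this
  obtain ⟨ξ, hξ0, hξd, hdd⟩ := hX x y
  set d := dist x y with hdef
  have hd : (0:ℝ) ≤ d := dist_nonneg
  -- the geodesic crosses the wall
  have hcross : ∃ t₀ ∈ Set.Icc (0:ℝ) d, ξ t₀ ∈ wall r := by
    by_contra hno
    push_neg at hno
    have hlip : LipschitzOnWith 1 ξ (Set.Icc 0 d) := by
      apply LipschitzOnWith.of_dist_le_mul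
      intro s hs t ht
      rw [hdd s hs t ht, Real.dist_eq, NNReal.coe_one, one_mul]
    have hconn : IsConnected (ξ '' Set.Icc 0 d) :=
      (isConnected_Icc hd).image ξ hlip.continuousOn
    have hsub : ξ '' Set.Icc 0 d ⊆ (wall r)ᶜ := by
      rintro w ⟨t, ht, rfl⟩; exact hno t ht
    have hKsub := hconn.isPreconnected.subset_connectedComponentIn
      (⟨0, ⟨le_refl _, hd⟩, hξ0⟩ : x ∈ ξ '' Set.Icc 0 d) hsub
    have hyK : y ∈ connectedComponentIn (wall r)ᶜ x :=
      hKsub ⟨d, ⟨hd, le_refl _⟩, hξd⟩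
    have hxK : x ∈ connectedComponentIn (wall r)ᶜ x :=
      mem_connectedComponentIn (hPc hx)
    rcases hcomp x (hPc hx) with h | h
    · exact hdisj y (h ▸ hyK) hy
    · exact hdisj x hx (h ▸ hxK)
  obtain ⟨t₀, ht₀, hw⟩ := hcross
  have hwfix : r (ξ t₀) = ξ t₀ := hw
  have h0I : (0:ℝ) ∈ Set.Icc (0:ℝ) d := ⟨le_refl _, hd⟩
  have hdI : d ∈ Set.Icc (0:ℝ) d := ⟨hd, le_refl _⟩
  have hxt : dist x (ξ t₀) = t₀ := by
    have := hdd 0 h0I t₀ ht₀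
    rw [hξ0] at this
    rw [this, abs_of_nonpos (by linarith [ht₀.1]), neg_sub, sub_zero]
  have hty : dist (ξ t₀) y = d - t₀ := by
    have := hdd t₀ ht₀ d hdI
    rw [hξd] at this
    rw [this, abs_of_nonpos (by linarith [ht₀.2]), neg_sub]
  have hle : dist x (r y) ≤ d := by
    calc dist x (r y) ≤ dist x (ξ t₀) + dist (ξ t₀) (r y) := dist_triangle _ _ _
    _ = t₀ + dist (r (ξ t₀)) (r y) := by rw [hxt, hwfix]
    _ = t₀ + (d - t₀) := by rw [r.dist_eq, hty]
    _ = d := by ring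
  -- strictness
  by_contra hlt
  push_neg at hlt
  have heq : dist x (r y) = d := le_antisymm hle hlt
  have hne0 : t₀ ≠ 0 := by
    intro h; rw [h, hξ0] at hw; exact hPc hx hw
  have hned : t₀ ≠ d := by
    intro h; rw [h, hξd] at hw; exact hMc hy hw
  have ht₀d : t₀ < d := lt_of_le_of_ne ht₀.2 hned
  set c : ℝ → X := fun t => if t ≤ t₀ then ξ t else r (ξ t) with hc
  have hc0 : c 0 = x := by simp only [hc, if_pos ht₀.1, hξ0]
  have hcd : c d = r y := by
    simp only [hc, if_neg (not_le.2 ht₀d), hξd]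
  have hcle : ∀ t, t ≤ t₀ → c t = ξ t := fun t ht => if_pos ht
  have hcge : ∀ t, t₀ ≤ t → c t = r (ξ t) := by
    intro t ht
    rcases eq_or_lt_of_le ht with h | h
    · simp only [hc, ← h, if_pos (le_refl t₀), hwfix]
    · exact if_neg (not_le.2 h)
  have hry : r y ∈ Xp := (hswap y).2 hy
  have key : ∀ s ∈ Set.Icc (0:ℝ) d, ∀ t ∈ Set.Icc (0:ℝ) d, s ≤ t →
      dist (c s) (c t) = t - s := by
    intro s hs t ht hst
    rcases le_or_gt t t₀ with h1 | h1
    · rw [hcle s (hst.trans h1), hcle t h1, hdd s hs t ht,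
        abs_of_nonpos (by linarith), neg_sub]
    rcases le_or_gt s t₀ with h2 | h2
    · -- s ≤ t₀ < t
      have hup : dist (c s) (c t) ≤ t - s := by
        calc dist (c s) (c t) ≤ dist (c s) (ξ t₀) + dist (ξ t₀) (c t) :=
              dist_triangle _ _ _
        _ = (t₀ - s) + (t - t₀) := by
            rw [hcle s h2, hcge t h1.le, hdd s hs t₀ ht₀, ← hwfix, r.dist_eq,
              hdd t₀ ht₀ t ht, abs_of_nonpos (by linarith), neg_sub,
              abs_of_nonpos (by linarith), neg_sub]
        _ = t - s := by ring
      have hxs : dist x (c s) = s := by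
        rw [hcle s h2, ← hξ0, hdd 0 h0I s hs, abs_of_nonpos (by linarith [hs.1]),
          neg_sub, sub_zero]
      have hty' : dist (c t) (r y) = d - t := by
        rw [hcge t h1.le, ← hξd, r.dist_eq, hdd t ht d hdI,
          abs_of_nonpos (by linarith [ht.2]), neg_sub]
      have hlow : t - s ≤ dist (c s) (c t) := by
        have := dist_triangle4 x (c s) (c t) (r y)
        rw [hxs, hty', heq] at this
        linarith
      linarith [le_antisymm hup hlow]
    · rw [hcge s h2.le, hcge t (h2.trans_le hst).le, r.dist_eq,
        hdd s hs t ht, abs_of_nonpos (by linarith), neg_sub]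
  have hgeo : IsGeodesicMap x (r y) c := by
    refine ⟨hc0, by rw [heq]; exact hcd, ?_⟩
    intro s hs t ht
    rw [heq] at hs ht
    rcases le_total s t with h | h
    · rw [key s hs t ht h, abs_of_nonpos (by linarith), neg_sub]
    · rw [dist_comm, key t ht s hs h, abs_of_nonneg (by linarith)]
  have := hPconv x hx (r y) hry c hgeo t₀ (by rw [heq]; exact ht₀)
  rw [hcle t₀ (le_refl _)] at this
  exact hPc this hw
end

section
/- Let X be a geodesic space and r a reflection of X with wall F_r and half-spaces X⁺, X⁻, with x ∈ X⁺. If y ∈ X⁺ then d(x, y) < d(x, r y), and if y ∈ F_r then d(x, y) = d(x, r y). Consequently, y ∈ X⁻ if and only if d(x, r y) < d(x, y). -/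
open Metric Set

variable {X : Type*} [MetricSpace X]

/-! ### Auxiliary lemmas -/

lemma IsGeodesicMap.continuousOn {x y : X} {ξ : ℝ → X} (h : IsGeodesicMap x y ξ) :
    ContinuousOn ξ (Set.Icc 0 (dist x y)) := by
  refine LipschitzOnWith.continuousOn (K := 1) ?_
  refine LipschitzOnWith.of_dist_le_mul fun s hs t ht => ?_
  rw [h.2.2 s hs t ht, Real.dist_eq, NNReal.coe_one, one_mul]

lemma GeodConvex.isPreconnected (hX : GeodesicSpace X) {C : Set X} (hC : GeodConvex C) :
    IsPreconnected C := by
  apply isPreconnected_of_forall_pair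
  intro a ha b hb
  obtain ⟨ξ, hξ⟩ := hX a b
  refine ⟨ξ '' Set.Icc 0 (dist a b), ?_, ?_, ?_, ?_⟩
  · rintro _ ⟨t, ht, rfl⟩; exact hC a ha b hb ξ hξ t ht
  · exact ⟨0, ⟨le_refl 0, dist_nonneg⟩, hξ.1⟩
  · exact ⟨dist a b, ⟨dist_nonneg, le_refl _⟩, hξ.2.1⟩
  · exact isPreconnected_Icc.image ξ hξ.continuousOn

lemma halfspaces_disjoint (hX : GeodesicSpace X) (r : X ≃ᵢ X) {Xp Xm : Set X}
    (hr : IsReflectionWith r Xp Xm)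
    (hswap : ∀ z : X, (z ∈ Xp → r z ∈ Xm) ∧ (z ∈ Xm → r z ∈ Xp)) :
    ∀ z, z ∈ Xp → z ∈ Xm → False := by
  obtain ⟨hinv, -, -, -, hne, hconvp, hconvm, hunion, hcomp⟩ := hr
  intro z hzp hzm
  have hpw : Xp ⊆ (wall r)ᶜ := hunion ▸ Set.subset_union_left
  have hmw : Xm ⊆ (wall r)ᶜ := hunion ▸ Set.subset_union_right
  have hps : Xp ⊆ connectedComponentIn (wall r)ᶜ z :=
    (hconvp.isPreconnected hX).subset_connectedComponentIn hzp hpw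
  have hms : Xm ⊆ connectedComponentIn (wall r)ᶜ z :=
    (hconvm.isPreconnected hX).subset_connectedComponentIn hzm hmw
  rcases hcomp z (hpw hzp) with hc | hc
  · -- Xm ⊆ Xp
    have hsub : Xm ⊆ Xp := hc ▸ hms
    refine hne (Set.Subset.antisymm (fun v hv => ?_) hsub)
    have h1 : r v ∈ Xm := (hswap v).1 hv
    have h2 : r (r v) ∈ Xm := (hswap (r v)).1 (hsub h1)
    rwa [hinv v] at h2
  · -- Xp ⊆ Xm
    have hsub : Xp ⊆ Xm := hc ▸ hps
    refine hne (Set.Subset.antisymm hsub (fun v hv => ?_))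
    have h1 : r v ∈ Xp := (hswap v).2 hv
    have h2 : r (r v) ∈ Xp := (hswap (r v)).2 (hsub h1)
    rwa [hinv v] at h2

lemma geodesic_crosses_wall (hX : GeodesicSpace X) (r : X ≃ᵢ X) {Xp Xm : Set X}
    (hr : IsReflectionWith r Xp Xm)
    (hswap : ∀ z : X, (z ∈ Xp → r z ∈ Xm) ∧ (z ∈ Xm → r z ∈ Xp))
    {x z : X} (hx : x ∈ Xp) (hz : z ∈ Xm) {ξ : ℝ → X} (hξ : IsGeodesicMap x z ξ) :
    ∃ t ∈ Set.Icc (0 : ℝ) (dist x z), ξ t ∈ wall r := by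
  by_contra hcon
  push_neg at hcon
  have hdisj := halfspaces_disjoint hX r hr hswap
  have hunion := hr.2.2.2.2.2.2.2.1
  have hpw : Xp ⊆ (wall r)ᶜ := hunion ▸ Set.subset_union_left
  have hK : ξ '' Set.Icc 0 (dist x z) ⊆ (wall r)ᶜ := by
    rintro _ ⟨t, ht, rfl⟩; exact hcon t ht
  have hKx : x ∈ ξ '' Set.Icc 0 (dist x z) := ⟨0, ⟨le_refl 0, dist_nonneg⟩, hξ.1⟩
  have hKz : z ∈ ξ '' Set.Icc 0 (dist x z) := ⟨dist x z, ⟨dist_nonneg, le_refl _⟩, hξ.2.1⟩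
  have hKc : IsPreconnected (ξ '' Set.Icc 0 (dist x z)) :=
    isPreconnected_Icc.image ξ hξ.continuousOn
  have hsub : ξ '' Set.Icc 0 (dist x z) ⊆ connectedComponentIn (wall r)ᶜ x :=
    hKc.subset_connectedComponentIn hKx hK
  rcases hr.2.2.2.2.2.2.2.2 x (hpw hx) with hc | hc
  · exact hdisj z (hc ▸ hsub hKz) hz
  · exact hdisj x hx (hc ▸ mem_connectedComponentIn (hpw hx))

lemma exists_geodesic_through (hX : GeodesicSpace X) (x w y : X)
    (h : dist x w + dist w y = dist x y) :
    ∃ ζ : ℝ → X, IsGeodesicMap x y ζ ∧ ζ (dist x w) = w := by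
  obtain ⟨η₁, h1, h1', h1''⟩ := hX x w
  obtain ⟨η₂, h2, h2', h2''⟩ := hX w y
  set a := dist x w with ha
  set b := dist w y with hb
  have ha0 : 0 ≤ a := dist_nonneg
  have hb0 : 0 ≤ b := dist_nonneg
  have hd : dist x y = a + b := h.symm
  refine ⟨fun t => if t ≤ a then η₁ t else η₂ (t - a), ⟨?_, ?_, ?_⟩, ?_⟩
  · simpa [ha0] using h1
  · rw [hd]
    by_cases hbz : b = 0
    · have : w = y := by rw [← dist_eq_zero, ← hb, hbz]
      simp [hbz, this ▸ h1']
    · have hblt : a < a + b := by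
        rcases lt_of_le_of_ne hb0 (Ne.symm hbz) with h'
        linarith
      show (if a + b ≤ a then η₁ (a + b) else η₂ (a + b - a)) = y
      rw [if_neg (not_le.mpr hblt), add_sub_cancel_left, h2']
  · rw [hd]
    have key : ∀ s ∈ Set.Icc (0:ℝ) (a+b), ∀ t ∈ Set.Icc (0:ℝ) (a+b), s ≤ t →
        dist ((fun t => if t ≤ a then η₁ t else η₂ (t - a)) s)
          ((fun t => if t ≤ a then η₁ t else η₂ (t - a)) t) = t - s := by
      intro s hs t ht hst
      show dist (if s ≤ a then η₁ s else η₂ (s - a)) (if t ≤ a then η₁ t else η₂ (t - a)) = t - s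
      by_cases hta : t ≤ a
      · have hsa : s ≤ a := le_trans hst hta
        rw [if_pos hsa, if_pos hta,
          h1'' s ⟨hs.1, hsa⟩ t ⟨le_trans hs.1 hst, hta⟩, abs_of_nonpos (by linarith)]
        ring
      · push_neg at hta
        have htb : t - a ∈ Set.Icc (0:ℝ) b := ⟨by linarith, by linarith [ht.2]⟩
        by_cases hsa : s ≤ a
        · rw [if_pos hsa, if_neg (not_le.mpr hta)]
          have hub : dist (η₁ s) (η₂ (t - a)) ≤ t - s := by
            have t1 : dist (η₁ s) (η₂ (t - a)) ≤ dist (η₁ s) w + dist w (η₂ (t - a)) :=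
              dist_triangle _ _ _
            have e1 : dist (η₁ s) w = a - s := by
              rw [← h1', h1'' s ⟨hs.1, hsa⟩ a ⟨ha0, le_refl a⟩, abs_of_nonpos (by linarith)]
              ring
            have e2 : dist w (η₂ (t - a)) = t - a := by
              rw [← h2, h2'' 0 ⟨le_refl 0, hb0⟩ (t - a) htb, abs_of_nonpos (by linarith [htb.1])]
              ring
            linarith
          have hlb : t - s ≤ dist (η₁ s) (η₂ (t - a)) := by
            have t1 : dist x y ≤ dist x (η₁ s) + dist (η₁ s) (η₂ (t - a)) + dist (η₂ (t - a)) y :=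
              dist_triangle4 x (η₁ s) (η₂ (t - a)) y
            have e3 : dist x (η₁ s) = s := by
              rw [← h1, h1'' 0 ⟨le_refl 0, ha0⟩ s ⟨hs.1, hsa⟩,
                abs_of_nonpos (by linarith [hs.1])]
              ring
            have e4 : dist (η₂ (t - a)) y = b - (t - a) := by
              rw [← h2', h2'' (t - a) htb b ⟨hb0, le_refl b⟩,
                abs_of_nonpos (by linarith [htb.2])]
              ring
            rw [hd] at t1
            linarith
          linarith
        · push_neg at hsa
          have hsb : s - a ∈ Set.Icc (0:ℝ) b := ⟨by linarith, by linarith [hs.2]⟩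
          rw [if_neg (not_le.mpr hsa), if_neg (not_le.mpr hta),
            h2'' (s - a) hsb (t - a) htb, abs_of_nonpos (by linarith)]
          ring
    intro s hs t ht
    rcases le_total s t with hst | hts
    · rw [key s hs t ht hst, abs_of_nonpos (by linarith)]; ring
    · rw [dist_comm, key t ht s hs hts, abs_of_nonneg (by linarith)]
  · simp [ha0, h1']

lemma dist_lt_dist_reflect_of_mem_plus (hX : GeodesicSpace X) (r : X ≃ᵢ X) {Xp Xm : Set X}
    (hr : IsReflectionWith r Xp Xm)
    (hswap : ∀ z : X, (z ∈ Xp → r z ∈ Xm) ∧ (z ∈ Xm → r z ∈ Xp))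
    {x : X} (hx : x ∈ Xp) {y : X} (hy : y ∈ Xp) :
    dist x y < dist x (r y) := by
  have hunion := hr.2.2.2.2.2.2.2.1
  have hpw : Xp ⊆ (wall r)ᶜ := hunion ▸ Set.subset_union_left
  have hry : r y ∈ Xm := (hswap y).1 hy
  obtain ⟨ξ, hξ⟩ := hX x (r y)
  obtain ⟨t₀, ht₀, hw⟩ := geodesic_crosses_wall hX r hr hswap hx hry hξ
  set w := ξ t₀ with hwdef
  have hrw : r w = w := hw
  have e1 : dist x w = t₀ := by
    have h := hξ.2.2 0 ⟨le_refl 0, dist_nonneg⟩ t₀ ht₀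
    rw [hξ.1] at h
    rw [hwdef, h, abs_of_nonpos (by linarith [ht₀.1])]
    ring
  have e2 : dist w (r y) = dist x (r y) - t₀ := by
    have h := hξ.2.2 t₀ ht₀ (dist x (r y)) ⟨dist_nonneg, le_refl _⟩
    rw [hξ.2.1] at h
    rw [hwdef, h, abs_of_nonpos (by linarith [ht₀.2])]
    ring
  have e3 : dist w y = dist x (r y) - t₀ := by
    have : dist (r w) (r y) = dist w y := r.dist_eq w y
    rw [hrw] at this
    rw [← this, e2]
  have hle : dist x y ≤ dist x (r y) := by
    have := dist_triangle x w y
    linarith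
  rcases lt_or_eq_of_le hle with h | heq
  · exact h
  · exfalso
    have hsum : dist x w + dist w y = dist x y := by rw [heq]; linarith
    obtain ⟨ζ, hζ, hζw⟩ := exists_geodesic_through hX x w y hsum
    have hwXp : ζ (dist x w) ∈ Xp :=
      hr.2.2.2.2.2.1 x hx y hy ζ hζ (dist x w)
        ⟨dist_nonneg, by linarith [hsum, dist_nonneg (x := w) (y := y)]⟩
    rw [hζw] at hwXp
    exact hpw hwXp hw

/-- with `x ∈ X⁺`: if `y ∈ X⁺` then `d(x,y) < d(x,ry)`; if `y ∈ F_r` then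
`d(x,y) = d(x,ry)`; and `y ∈ X⁻ ↔ d(x,ry) < d(x,y)`. -/
theorem mem_minus_iff_dist_reflect_lt
    (hX : GeodesicSpace X) (r : X ≃ᵢ X) (Xp Xm : Set X)
    (hr : IsReflectionWith r Xp Xm)
    (hswap : ∀ z : X, (z ∈ Xp → r z ∈ Xm) ∧ (z ∈ Xm → r z ∈ Xp))
    {x : X} (hx : x ∈ Xp) (y : X) :
    (y ∈ Xp → dist x y < dist x (r y)) ∧
    (y ∈ wall r → dist x y = dist x (r y)) ∧
    (y ∈ Xm ↔ dist x (r y) < dist x y) := by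
  refine ⟨fun hy => dist_lt_dist_reflect_of_mem_plus hX r hr hswap hx hy, ?_, ?_, ?_⟩
  · intro hy
    have : r y = y := hy
    rw [this]
  · intro hy
    have hry : r y ∈ Xp := (hswap y).2 hy
    have := dist_lt_dist_reflect_of_mem_plus hX r hr hswap hx hry
    rwa [hr.1 y] at this
  · intro hlt
    have hyw : y ∉ wall r := by
      intro hy
      have : r y = y := hy
      rw [this] at hlt
      exact lt_irrefl _ hlt
    have : y ∈ Xp ∪ Xm := hr.2.2.2.2.2.2.2.1 ▸ hyw
    rcases this with hy | hy
    · exact absurd (dist_lt_dist_reflect_of_mem_plus hX r hr hswap hx hy) (by linarith)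
    · exact hy
end

section
/- Let Γ be a reflection group of a geodesic space X acting properly, R the set of all reflections in Γ, and C a connected component of X \ ⋃_{r ∈ R} F_r. For each r ∈ R let X_r⁺ be the half-space containing C. Then C = ⋂_{r ∈ R} X_r⁺. -/
open Metric Set

variable {X : Type*} [MetricSpace X]

/-- the chamber is the intersection of the positive half-spaces. -/
theorem chamber_eq_iInter_halfspaces
    (hX : GeodesicSpace X) (Γ : Subgroup (X ≃ᵢ X))
    (hrg : IsReflectionGroup Γ) (hprop : ProperAction Γ)
    (C : Set X) (hC : IsChamber Γ C)
    (Xp Xm : (X ≃ᵢ X) → Set X) (hhs : HalfSpaces Γ C Xp Xm) :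
    C = ⋂ r ∈ reflections Γ, Xp r := by
  obtain ⟨c, hc, rfl⟩ := hC
  have hcC : c ∈ connectedComponentIn (chamberComplement Γ) c :=
    mem_connectedComponentIn hc
  apply Set.Subset.antisymm
  · intro x hx
    exact Set.mem_iInter₂.2 fun r hr => (hhs r hr).2 hx
  · intro x hx
    have hxXp : ∀ r ∈ reflections Γ, x ∈ Xp r := fun r hr => Set.mem_iInter₂.1 hx r hr
    obtain ⟨ξ, hξ0, hξd, hξiso⟩ := hX c x
    set K : Set X := ξ '' Set.Icc 0 (dist c x) with hK
    have hcont : ContinuousOn ξ (Set.Icc 0 (dist c x)) := by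
      intro t ht
      rw [Metric.continuousWithinAt_iff]
      intro ε hε
      exact ⟨ε, hε, fun s hs hst => by
        rw [hξiso s hs t ht]
        rwa [Real.dist_eq] at hst⟩
    have hKconn : IsPreconnected K := (isPreconnected_Icc).image ξ hcont
    have hKsub : K ⊆ chamberComplement Γ := by
      rintro y ⟨t, ht, rfl⟩
      intro hy
      simp only [Set.mem_iUnion] at hy
      obtain ⟨r, hr, hyr⟩ := hy
      obtain ⟨⟨hinv, hint, hpne, hmne, hne, hpc, hmc, hunion, hcomp⟩, hCXp⟩ := hhs r hr
      have hξXp : ξ t ∈ Xp r := hpc c (hCXp hcC) x (hxXp r hr) ξ ⟨hξ0, hξd, hξiso⟩ t ht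
      have : ξ t ∈ (wall r)ᶜ := hunion ▸ Set.mem_union_left _ hξXp
      exact this hyr
    have hcK : c ∈ K := ⟨0, Set.left_mem_Icc.2 dist_nonneg, hξ0⟩
    have hxK : x ∈ K := ⟨dist c x, Set.right_mem_Icc.2 dist_nonneg, hξd⟩
    exact hKconn.subset_connectedComponentIn hcK hKsub hxK
end

section
/- Let W be a group generated by a finite set S of involutions, and let ℓ be the word length on W with respect to S. Suppose the folding condition holds: for all γ ∈ W and s, t ∈ S with ℓ(sγ) = ℓ(γ) + 1 and ℓ(γt) = ℓ(γ) + 1, either ℓ(sγt) = ℓ(γ) + 2 or sγt = γ. Then (W, S) is a Coxeter system. -/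
open Metric Set

variable {X : Type*} [MetricSpace X]

/-!
Condition (F), applied along a reduced word `s₁ ⋯ sₙ` of `w`, yields the exchange condition:
either `ℓ(wt) = ℓ(w) + 1`, or `sᵢ ⋯ sₙ t = sᵢ₊₁ ⋯ sₙ` for some `i`, so that deleting `sᵢ` gives a
word for `wt`. If two generators `a` and `b` both shorten `w` on the right, repeated exchanges
show that `w` has a reduced word ending in an alternating word `⋯ a b` of any length `r` below
`m(a, b) = ord(ab)`; since reduced words are no longer than `ℓ(w)`, `m(a, b)` is finite and the
braid words of `a, b` both occur as suffixes of reduced words of `w`. This gives Tits' solution of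
the word problem: two reduced words for the same element have the same image in the Coxeter group
of the matrix `(ord(st))`, by induction on the length, comparing last letters and using one braid
relation. Hence the canonical surjection from that Coxeter group onto `W` is injective.
-/

theorem CoxeterSystem.eq_alternatingWord_of_isSuffix {B : Type*} {i i' : B} {n : ℕ} {l : List B}
    (h : l <:+ CoxeterSystem.alternatingWord i i' n) :
    l = CoxeterSystem.alternatingWord i i' l.length := by
  induction n generalizing i i' l with
  | zero =>
    rw [List.suffix_nil.1 h]
    rfl
  | succ n ih =>
    rw [CoxeterSystem.alternatingWord_succ, List.concat_eq_append, List.suffix_concat_iff] at h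
    rcases h with rfl | ⟨t, rfl, ht⟩
    · rfl
    · rw [List.length_append, List.length_singleton, CoxeterSystem.alternatingWord_succ, ← ih ht,
        List.concat_eq_append]

theorem isCoxeterSystemOn_range_simple {B W : Type*} [Small.{0} B] [Group W]
    {M : CoxeterMatrix B} (cs : CoxeterSystem M W) : IsCoxeterSystemOn W (Set.range cs.simple) :=
  ⟨Shrink B, M.reindex (equivShrink B), cs.reindex (equivShrink B),
    (equivShrink B).symm.surjective.range_comp cs.simple⟩

namespace CoxeterFolding

open CoxeterSystem (alternatingWord braidWord alternatingWord_succ eq_alternatingWord_of_isSuffix)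

variable {W : Type*} [Group W]

section Words

variable (S : Set W)

def wordProd (l : List S) : W := (l.map (↑)).prod

-- Junk value: `sInf ∅ = 0` for elements that are not products of generators.
noncomputable def length (w : W) : ℕ := sInf {n | ∃ l, wordProd S l = w ∧ l.length = n}

def IsReduced (l : List S) : Prop := length S (wordProd S l) = l.length

end Words

variable {S : Set W}

@[simp] theorem wordProd_nil : wordProd S [] = 1 := rfl

@[simp] theorem wordProd_cons (s : S) (l : List S) : wordProd S (s :: l) = s * wordProd S l :=
  List.prod_cons

@[simp] theorem wordProd_append (l l' : List S) :
    wordProd S (l ++ l') = wordProd S l * wordProd S l' := by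
  simp [wordProd]

theorem length_le (l : List S) : length S (wordProd S l) ≤ l.length :=
  Nat.sInf_le ⟨l, rfl, rfl⟩

theorem exists_isReduced (l : List S) : ∃ l', IsReduced S l' ∧ wordProd S l' = wordProd S l := by
  obtain ⟨l', hl', hlen⟩ :=
    Nat.sInf_mem (s := {n | ∃ l', wordProd S l' = wordProd S l ∧ l'.length = n}) ⟨_, l, rfl, rfl⟩
  exact ⟨l', by rw [IsReduced, hl', hlen]; rfl, hl'⟩

theorem isReduced_of_length_le {l : List S} (h : l.length ≤ length S (wordProd S l)) :
    IsReduced S l :=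
  le_antisymm (length_le l) h

theorem IsReduced.length_mul_lt (hS : ∀ s ∈ S, s * s = 1) {p : List S} {a : S}
    (h : IsReduced S (p ++ [a])) :
    length S (wordProd S (p ++ [a]) * a) < length S (wordProd S (p ++ [a])) := by
  have hpa : wordProd S (p ++ [a]) * a = wordProd S p := by simp [mul_assoc, hS a a.2]
  rw [hpa, h, List.length_append, List.length_singleton]
  exact Nat.lt_succ_of_le (length_le p)

@[simp] theorem isReduced_nil : IsReduced S [] :=
  isReduced_of_length_le (Nat.zero_le _)

theorem length_wordProd_append_le (l l' : List S) :
    length S (wordProd S (l ++ l')) ≤ length S (wordProd S l) + length S (wordProd S l') := by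
  obtain ⟨r, hr, hrl⟩ := exists_isReduced l
  obtain ⟨r', hr', hrl'⟩ := exists_isReduced l'
  calc length S (wordProd S (l ++ l')) = length S (wordProd S (r ++ r')) := by
        rw [wordProd_append, wordProd_append, hrl, hrl']
    _ ≤ r.length + r'.length := by simpa using length_le (r ++ r')
    _ = length S (wordProd S l) + length S (wordProd S l') := by rw [← hr, ← hr', hrl, hrl']

theorem IsReduced.append_left {l l' : List S} (h : IsReduced S (l ++ l')) : IsReduced S l := by
  have hle := length_wordProd_append_le l l'
  rw [h, List.length_append] at hle
  exact isReduced_of_length_le (by linarith [length_le l'])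

theorem IsReduced.append_right {l l' : List S} (h : IsReduced S (l ++ l')) : IsReduced S l' := by
  have hle := length_wordProd_append_le l l'
  rw [h, List.length_append] at hle
  exact isReduced_of_length_le (by linarith [length_le l])

theorem length_coe (h1 : (1 : W) ∉ S) (s : S) : length S (s : W) = 1 := by
  have hs : wordProd S [s] = s := mul_one _
  obtain ⟨l, hl, hls⟩ := exists_isReduced [s]
  rw [hs] at hls
  refine le_antisymm (hs ▸ length_le [s]) (Nat.one_le_iff_ne_zero.2 fun h0 => h1 ?_)
  rw [IsReduced, hls, h0, eq_comm, List.length_eq_zero_iff] at hl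
  have hsS := s.2
  rwa [← hls, hl] at hsS

theorem isWordLength_iff_isLeast {w : W} {n : ℕ} :
    IsWordLength S w n ↔ IsLeast {n | ∃ l, wordProd S l = w ∧ l.length = n} n := by
  constructor
  · rintro ⟨⟨l, hmem, rfl, rfl⟩, hmin⟩
    lift l to List S using hmem
    refine ⟨⟨l, rfl, by simp⟩, fun _ ⟨l', hl', hlen⟩ => hlen ▸ ?_⟩
    simpa using hmin _ (by simp +contextual) hl'
  · rintro ⟨⟨l, rfl, rfl⟩, hmin⟩
    refine ⟨⟨l.map (↑), by simp +contextual, rfl, by simp⟩, fun l' hmem hl' => ?_⟩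
    lift l' to List S using hmem
    simpa using hmin ⟨l', hl', rfl⟩

theorem IsWordLength.length_eq {w : W} {n : ℕ} (h : IsWordLength S w n) : length S w = n :=
  (isWordLength_iff_isLeast.1 h).csInf_eq

theorem exists_wordProd_eq (hS : ∀ s ∈ S, s * s = 1) (hgen : Subgroup.closure S = ⊤) (w : W) :
    ∃ l, wordProd S l = w := by
  have hinv : S⁻¹ ⊆ S := fun s hs => by
    have : s = s⁻¹ := by simpa using inv_eq_of_mul_eq_one_right (hS _ hs)
    rwa [this]
  have hw : w ∈ Submonoid.closure (S ∪ S⁻¹) := by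
    rw [← Subgroup.closure_toSubmonoid, hgen]; trivial
  rw [Set.union_eq_self_of_subset_right hinv] at hw
  obtain ⟨l, hmem, rfl⟩ := Submonoid.exists_list_of_mem_closure hw
  lift l to List S using hmem
  exact ⟨l, rfl⟩

theorem isWordLength_length (hS : ∀ s ∈ S, s * s = 1) (hgen : Subgroup.closure S = ⊤) (w : W) :
    IsWordLength S w (length S w) := by
  obtain ⟨l, rfl⟩ := exists_wordProd_eq hS hgen w
  exact isWordLength_iff_isLeast.2 ⟨Nat.sInf_mem ⟨_, l, rfl, rfl⟩, fun _ hm => Nat.sInf_le hm⟩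

noncomputable def coxeterMatrix (hS : ∀ s ∈ S, s * s = 1) : CoxeterMatrix S where
  M := Matrix.of fun i j => orderOf ((i : W) * j)
  isSymm := Matrix.IsSymm.ext fun i j =>
    SemiconjBy.orderOf_eq (i : W) (mul_assoc (i : W) j i).symm
  diagonal i := by simp [hS i i.2]
  off_diagonal i j hij h := hij <| Subtype.ext <| by
    rw [Matrix.of_apply, orderOf_eq_one_iff, mul_eq_one_iff_eq_inv] at h
    rw [h, inv_eq_of_mul_eq_one_right (hS j j.2)]

theorem wordProd_alternatingWord_inv_mul (hS : ∀ s ∈ S, s * s = 1) (i i' : S) (k : ℕ) :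
    (wordProd S (alternatingWord i i' k))⁻¹ * wordProd S (alternatingWord i' i k) =
      ((i' : W) * i) ^ k := by
  induction k generalizing i i' with
  | zero => simp [alternatingWord]
  | succ k ih =>
    have hsemi : SemiconjBy (i' : W) (i * i') (i' * i) := (mul_assoc _ _ _).symm
    simp only [alternatingWord_succ, List.concat_eq_append, wordProd_append, wordProd_cons,
      wordProd_nil, mul_one, mul_inv_rev, inv_eq_of_mul_eq_one_right (hS _ i'.2)]
    set u := wordProd S (alternatingWord i' i k)
    set v := wordProd S (alternatingWord i i' k)
    calc (i' : W) * u⁻¹ * (v * i) = i' * (u⁻¹ * v) * i := by group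
      _ = ((i' : W) * i) ^ (k + 1) := by rw [ih, (hsemi.pow_right k).eq, mul_assoc, pow_succ]

theorem wordProd_alternatingWord_eq_iff (hS : ∀ s ∈ S, s * s = 1) {i i' : S} {k : ℕ} :
    wordProd S (alternatingWord i i' k) = wordProd S (alternatingWord i' i k) ↔
      coxeterMatrix hS i' i ∣ k := by
  rw [← inv_mul_eq_one, wordProd_alternatingWord_inv_mul hS, ← orderOf_dvd_iff_pow_eq_one]
  rfl

def FoldingCondition (S : Set W) : Prop :=
  ∀ (γ : W) (s t : S), length S (s * γ) = length S γ + 1 → length S (γ * t) = length S γ + 1 →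
    length S (s * γ * t) = length S γ + 2 ∨ (s : W) * γ * t = γ

theorem foldingCondition_of_isWordLength (hS : ∀ s ∈ S, s * s = 1)
    (hgen : Subgroup.closure S = ⊤)
    (hfold : ∀ γ : W, ∀ s ∈ S, ∀ t ∈ S, ∀ n : ℕ,
      IsWordLength S γ n → IsWordLength S (s * γ) (n + 1) →
      IsWordLength S (γ * t) (n + 1) →
      IsWordLength S (s * γ * t) (n + 2) ∨ s * γ * t = γ) :
    FoldingCondition S := by
  intro γ s t hs ht
  have hw := isWordLength_length hS hgen
  rcases hfold γ s s.2 t t.2 _ (hw γ) (hs ▸ hw _) (ht ▸ hw _) with h | h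
  exacts [Or.inl (IsWordLength.length_eq h), Or.inr h]

namespace FoldingCondition

theorem exchange (hF : FoldingCondition S) (h1 : (1 : W) ∉ S) {l : List S} (hl : IsReduced S l)
    (t : S) :
    length S (wordProd S l * t) = l.length + 1 ∨
      ∃ A x B, l = A ++ x :: B ∧ wordProd S (x :: B) * t = wordProd S B := by
  induction l with
  | nil => exact Or.inl (by simpa using length_coe h1 t)
  | cons s l ih =>
    have hl' : IsReduced S l := IsReduced.append_right (l := [s]) hl
    rcases ih hl' with hlt | ⟨A, x, B, rfl, hxB⟩
    · have hs : length S (s * wordProd S l) = length S (wordProd S l) + 1 := by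
        rw [hl']; simpa [IsReduced] using hl
      rcases hF (wordProd S l) s t hs (by rw [hl', hlt]) with h | h
      · exact Or.inl (by rw [wordProd_cons, h, hl', List.length_cons])
      · exact Or.inr ⟨[], s, l, rfl, by rw [wordProd_cons, h]⟩
    · exact Or.inr ⟨s :: A, x, B, rfl, hxB⟩

theorem exists_reduced_alternatingWord_suffix_succ (hF : FoldingCondition S)
    (h1 : (1 : W) ∉ S) (hS : ∀ s ∈ S, s * s = 1) {q : List S} {c c' : S} {r : ℕ}
    (hq : IsReduced S (q ++ alternatingWord c c' r))
    (hc : length S (wordProd S (q ++ alternatingWord c c' r) * c) <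
      length S (wordProd S (q ++ alternatingWord c c' r)))
    (hr : ∀ k, 0 < k → k ≤ r →
      wordProd S (alternatingWord c c' k) ≠ wordProd S (alternatingWord c' c k)) :
    ∃ q', IsReduced S (q' ++ alternatingWord c' c (r + 1)) ∧
      wordProd S (q' ++ alternatingWord c' c (r + 1)) =
        wordProd S (q ++ alternatingWord c c' r) := by
  -- The letter exchanged for `c` lies either before the alternating suffix, which then grows by
  -- `c`, or inside it, which would give a braid relation of length at most `r`.
  rcases hF.exchange h1 hq c with hlen | ⟨A, x, B, hl, hxB⟩
  · rw [hq] at hc; omega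
  have hxB' : wordProd S (x :: B) = wordProd S B * c := by
    rw [← hxB, mul_assoc, hS c c.2, mul_one]
  have hsuf : alternatingWord c c' r <:+ A ++ x :: B := hl ▸ List.suffix_append _ _
  have hBsuf : B <:+ A ++ x :: B := (List.suffix_cons x B).trans (List.suffix_append _ _)
  rcases le_or_gt r B.length with hrB | hBr
  · obtain ⟨v, rfl⟩ := List.suffix_of_suffix_length_le hsuf hBsuf (by simpa using hrB)
    have hprod : wordProd S (A ++ v ++ alternatingWord c' c (r + 1)) =
        wordProd S (q ++ alternatingWord c c' r) := by
      rw [hl, alternatingWord_succ, List.concat_eq_append]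
      simp only [wordProd_append, wordProd_cons, wordProd_nil, mul_one] at hxB' ⊢
      rw [hxB']; group
    refine ⟨A ++ v, isReduced_of_length_le ?_, hprod⟩
    have hlen := congrArg List.length hl
    simp only [List.length_append, List.length_cons, CoxeterSystem.length_alternatingWord] at hlen
    rw [hprod, hq]
    simp only [List.length_append, CoxeterSystem.length_alternatingWord]
    omega
  · have hxBsuf : x :: B <:+ alternatingWord c c' r :=
      List.suffix_of_suffix_length_le (hl ▸ List.suffix_append A (x :: B)) hsuf (by simpa using hBr)
    refine absurd ?_ (hr (B.length + 1) (Nat.succ_pos _) hBr)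
    calc wordProd S (alternatingWord c c' (B.length + 1))
        = wordProd S (x :: B) := congrArg (wordProd S) (eq_alternatingWord_of_isSuffix hxBsuf).symm
      _ = wordProd S B * c := hxB'
      _ = wordProd S (alternatingWord c c' B.length) * c := by
          rw [← eq_alternatingWord_of_isSuffix ((List.suffix_cons x B).trans hxBsuf)]
      _ = wordProd S (alternatingWord c' c (B.length + 1)) := by
          simp [alternatingWord_succ c' c]

theorem exists_reduced_alternatingWord_suffix (hF : FoldingCondition S) (h1 : (1 : W) ∉ S)
    (hS : ∀ s ∈ S, s * s = 1) (l : List S) {a b : S}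
    (ha : length S (wordProd S l * a) < length S (wordProd S l))
    (hb : length S (wordProd S l * b) < length S (wordProd S l)) (r : ℕ)
    (hr : ∀ k, 0 < k → k < r →
      wordProd S (alternatingWord a b k) ≠ wordProd S (alternatingWord b a k)) :
    (∃ q, IsReduced S (q ++ alternatingWord a b r) ∧
      wordProd S (q ++ alternatingWord a b r) = wordProd S l) ∧
    (∃ q, IsReduced S (q ++ alternatingWord b a r) ∧
      wordProd S (q ++ alternatingWord b a r) = wordProd S l) := by
  induction r with
  | zero =>
    obtain ⟨l', hl', hprod⟩ := exists_isReduced l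
    exact ⟨⟨l', by simpa [alternatingWord] using hl', by simpa [alternatingWord] using hprod⟩,
      ⟨l', by simpa [alternatingWord] using hl', by simpa [alternatingWord] using hprod⟩⟩
  | succ r ih =>
    obtain ⟨⟨qa, hqa, hqa'⟩, ⟨qb, hqb, hqb'⟩⟩ := ih fun k hk hkr => hr k hk (by omega)
    constructor
    · obtain ⟨q, hq, hq'⟩ := hF.exists_reduced_alternatingWord_suffix_succ h1 hS hqb
        (by rwa [hqb']) fun k hk hkr => (hr k hk (by omega)).symm
      exact ⟨q, hq, hq'.trans hqb'⟩
    · obtain ⟨q, hq, hq'⟩ := hF.exists_reduced_alternatingWord_suffix_succ h1 hS hqa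
        (by rwa [hqa']) fun k hk hkr => hr k hk (by omega)
      exact ⟨q, hq, hq'.trans hqa'⟩

theorem exists_reduced_braidWord_suffix (hF : FoldingCondition S) (h1 : (1 : W) ∉ S)
    (hS : ∀ s ∈ S, s * s = 1) (l : List S) {a b : S}
    (ha : length S (wordProd S l * a) < length S (wordProd S l))
    (hb : length S (wordProd S l * b) < length S (wordProd S l)) :
    coxeterMatrix hS a b ≠ 0 ∧ ∃ q,
      IsReduced S (q ++ braidWord (coxeterMatrix hS) a b) ∧
      IsReduced S (q ++ braidWord (coxeterMatrix hS) b a) ∧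
      wordProd S (q ++ braidWord (coxeterMatrix hS) a b) = wordProd S l ∧
      wordProd S (q ++ braidWord (coxeterMatrix hS) b a) = wordProd S l := by
  set M := coxeterMatrix hS
  have hsuffix := hF.exists_reduced_alternatingWord_suffix h1 hS l ha hb
  have hbraid : ∀ k, wordProd S (alternatingWord a b k) = wordProd S (alternatingWord b a k) ↔
      M a b ∣ k := fun k => by rw [wordProd_alternatingWord_eq_iff hS, M.symmetric b a]
  have hM : M a b ≠ 0 := by
    intro h0
    obtain ⟨q, hq, hql⟩ := (hsuffix (l.length + 1) fun k hk _ h => by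
      rw [hbraid, h0, zero_dvd_iff] at h; omega).1
    have hle := length_le l
    rw [← hql, hq] at hle
    simp only [List.length_append, CoxeterSystem.length_alternatingWord] at hle
    omega
  obtain ⟨q, hq, hql⟩ := (hsuffix (M a b) fun k hk hkM h =>
    absurd (Nat.le_of_dvd hk ((hbraid k).1 h)) (by omega)).1
  have hba : wordProd S (q ++ braidWord M b a) = wordProd S (q ++ braidWord M a b) := by
    rw [braidWord, braidWord, M.symmetric b a, wordProd_append, wordProd_append,
      (hbraid _).2 dvd_rfl]
  refine ⟨hM, q, hq, isReduced_of_length_le ?_, hql, hba.trans hql⟩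
  rw [hba, hq]
  simp [M.symmetric b a]

theorem coxeterWordProd_eq_of_isReduced (hF : FoldingCondition S) (h1 : (1 : W) ∉ S)
    (hS : ∀ s ∈ S, s * s = 1) {l l' : List S} (hl : IsReduced S l) (hl' : IsReduced S l')
    (h : wordProd S l = wordProd S l') :
    (coxeterMatrix hS).toCoxeterSystem.wordProd l =
      (coxeterMatrix hS).toCoxeterSystem.wordProd l' := by
  set M := coxeterMatrix hS
  set cs := M.toCoxeterSystem
  obtain ⟨n, hn⟩ : ∃ n, l.length = n := ⟨_, rfl⟩
  induction n using Nat.strong_induction_on generalizing l l' with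
  | _ n ih =>
  have hlen : l'.length = l.length := by rw [← hl, ← hl', h]
  have same_last : ∀ {p p' : List S} {a : S}, IsReduced S (p ++ [a]) → IsReduced S (p' ++ [a]) →
      wordProd S (p ++ [a]) = wordProd S (p' ++ [a]) → (p ++ [a]).length = n →
      cs.wordProd (p ++ [a]) = cs.wordProd (p' ++ [a]) := by
    intro p p' a hp hp' hpp' hpn
    rw [cs.wordProd_append, cs.wordProd_append, ih p.length (by simp at hpn; omega)
      hp.append_left hp'.append_left (by simpa using hpp') rfl]
  rcases l.eq_nil_or_concat' with rfl | ⟨p, a, rfl⟩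
  · rw [List.length_eq_zero_iff.1 hlen]
  obtain ⟨p', b, rfl⟩ := l'.eq_nil_or_concat'.resolve_left (by rintro rfl; simp at hlen)
  obtain ⟨hM, q, hqab, hqba, hqab', hqba'⟩ := hF.exists_reduced_braidWord_suffix h1 hS (p ++ [a])
    (hl.length_mul_lt hS) (by rw [h]; exact hl'.length_mul_lt hS)
  obtain ⟨m, hm⟩ := Nat.exists_eq_succ_of_ne_zero hM
  have hba : q ++ braidWord M b a = q ++ alternatingWord a b m ++ [a] := by
    rw [braidWord, M.symmetric b a, hm, alternatingWord_succ, List.concat_eq_append,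
      List.append_assoc]
  have hab : q ++ braidWord M a b = q ++ alternatingWord b a m ++ [b] := by
    rw [braidWord, hm, alternatingWord_succ, List.concat_eq_append, List.append_assoc]
  calc cs.wordProd (p ++ [a])
      = cs.wordProd (q ++ braidWord M b a) := by
        rw [hba] at hqba hqba' ⊢
        exact same_last hl hqba hqba'.symm hn
    _ = cs.wordProd (q ++ braidWord M a b) := by
        rw [cs.wordProd_append, cs.wordProd_append, cs.wordProd_braidWord_eq]
    _ = cs.wordProd (p' ++ [b]) := by
        rw [hab] at hqab hqab' ⊢
        exact same_last hqab hl' (hqab'.trans h) (by rw [← hqab, hqab', hl, hn])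

theorem exists_isReduced_coxeterWordProd_eq (hF : FoldingCondition S) (h1 : (1 : W) ∉ S)
    (hS : ∀ s ∈ S, s * s = 1) (x : (coxeterMatrix hS).Group) :
    ∃ l, IsReduced S l ∧ (coxeterMatrix hS).toCoxeterSystem.wordProd l = x := by
  set cs := (coxeterMatrix hS).toCoxeterSystem
  induction x using cs.simple_induction_right with
  | one => exact ⟨[], isReduced_nil, cs.wordProd_nil⟩
  | mul_simple_right x t ih =>
    obtain ⟨l, hl, rfl⟩ := ih
    rcases hF.exchange h1 hl t with hlen | ⟨A, y, B, rfl, hyB⟩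
    · refine ⟨l ++ [t], isReduced_of_length_le ?_, ?_⟩
      · simpa using hlen.ge
      · rw [cs.wordProd_append, cs.wordProd_singleton]
    obtain ⟨r, hr, hrAB⟩ := exists_isReduced (A ++ B)
    have hprod : wordProd S (r ++ [t]) = wordProd S (A ++ y :: B) := by
      have hBt : (y : W) * wordProd S B = wordProd S B * t := by
        conv_lhs => rw [← hyB]
        rw [wordProd_cons, ← mul_assoc, ← mul_assoc, hS y y.2, one_mul]
      simp only [wordProd_append, hrAB, wordProd_cons, wordProd_nil, mul_one, hBt, mul_assoc]
    have hred : IsReduced S (r ++ [t]) := by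
      refine isReduced_of_length_le ?_
      have hrlen : r.length ≤ (A ++ B).length := by rw [← hr, hrAB]; exact length_le _
      rw [hprod, hl]
      simp only [List.length_append, List.length_cons, List.length_nil] at hrlen ⊢
      omega
    refine ⟨r, hr, ?_⟩
    have hcs := hF.coxeterWordProd_eq_of_isReduced h1 hS hred hl hprod
    rw [cs.wordProd_append, cs.wordProd_singleton] at hcs
    rw [← hcs, mul_assoc, cs.simple_mul_simple_self, mul_one]

end FoldingCondition

noncomputable def coxeterLift (hS : ∀ s ∈ S, s * s = 1) : (coxeterMatrix hS).Group →* W :=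
  (coxeterMatrix hS).toCoxeterSystem.lift ⟨(↑), fun i j => pow_orderOf_eq_one ((i : W) * j)⟩

theorem coxeterLift_simple (hS : ∀ s ∈ S, s * s = 1) (s : S) :
    coxeterLift hS ((coxeterMatrix hS).toCoxeterSystem.simple s) = s :=
  CoxeterSystem.lift_apply_simple _ _ s

theorem coxeterLift_wordProd (hS : ∀ s ∈ S, s * s = 1) (l : List S) :
    coxeterLift hS ((coxeterMatrix hS).toCoxeterSystem.wordProd l) = wordProd S l := by
  induction l with
  | nil => simp
  | cons s l ih => rw [CoxeterSystem.wordProd_cons, map_mul, ih, coxeterLift_simple, wordProd_cons]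

theorem FoldingCondition.coxeterLift_bijective (hF : FoldingCondition S) (h1 : (1 : W) ∉ S)
    (hS : ∀ s ∈ S, s * s = 1) (hgen : Subgroup.closure S = ⊤) :
    Function.Bijective (coxeterLift hS) := by
  refine ⟨fun x y hxy => ?_, fun w => ?_⟩
  · obtain ⟨l, hl, rfl⟩ := hF.exists_isReduced_coxeterWordProd_eq h1 hS x
    obtain ⟨l', hl', rfl⟩ := hF.exists_isReduced_coxeterWordProd_eq h1 hS y
    rw [coxeterLift_wordProd, coxeterLift_wordProd] at hxy
    exact hF.coxeterWordProd_eq_of_isReduced h1 hS hl hl' hxy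
  · obtain ⟨l, rfl⟩ := exists_wordProd_eq hS hgen w
    exact ⟨_, coxeterLift_wordProd hS l⟩

noncomputable def FoldingCondition.coxeterSystem (hF : FoldingCondition S) (h1 : (1 : W) ∉ S)
    (hS : ∀ s ∈ S, s * s = 1) (hgen : Subgroup.closure S = ⊤) :
    CoxeterSystem (coxeterMatrix hS) W :=
  (coxeterMatrix hS).toCoxeterSystem.map
    (MulEquiv.ofBijective _ (hF.coxeterLift_bijective h1 hS hgen))

theorem FoldingCondition.range_coxeterSystem_simple (hF : FoldingCondition S)
    (h1 : (1 : W) ∉ S) (hS : ∀ s ∈ S, s * s = 1) (hgen : Subgroup.closure S = ⊤) :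
    Set.range (hF.coxeterSystem h1 hS hgen).simple = S := by
  have : (hF.coxeterSystem h1 hS hgen).simple = (↑) := funext (coxeterLift_simple hS)
  rw [this, Subtype.range_coe]

end CoxeterFolding

/-- a group generated by a finite set of involutions satisfying the
folding condition is a Coxeter system. -/
theorem coxeter_of_folding
    {W : Type*} [Group W] (S : Set W) (hfin : S.Finite)
    (hinv : ∀ s ∈ S, s * s = 1 ∧ s ≠ 1)
    (hgen : Subgroup.closure S = ⊤)
    (hfold : ∀ γ : W, ∀ s ∈ S, ∀ t ∈ S, ∀ n : ℕ,
      IsWordLength S γ n → IsWordLength S (s * γ) (n + 1) →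
      IsWordLength S (γ * t) (n + 1) →
      IsWordLength S (s * γ * t) (n + 2) ∨ s * γ * t = γ) :
    IsCoxeterSystemOn W S := by
  have hS : ∀ s ∈ S, s * s = 1 := fun s hs => (hinv s hs).1
  have h1 : (1 : W) ∉ S := fun h => (hinv 1 h).2 rfl
  have hF := CoxeterFolding.foldingCondition_of_isWordLength hS hgen hfold
  have : Small.{0} S := @Countable.toSmall _ hfin.countable.to_subtype
  simpa only [hF.range_coxeterSystem_simple h1 hS hgen] using
    isCoxeterSystemOn_range_simple (hF.coxeterSystem h1 hS hgen)
end
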